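/- arXiv:1501.00395 — 2 statements merged into one kernel-verified Lean document; each statement's English description precedes it below -/
import Mathlib

section
/- Let Σ = {α, S₀, ϑ₁, ϑ₂} be an admissible quadruple with transfer function W_Σ(z) = I_m + iΛ*S₀⁻¹(zI_n − α)⁻¹Λ, Λ = [ϑ₁, ϑ₂], and write W_Σ(z) in 2×2 block form W_Σ(z) = [[a(z), b(z)], [c(z), d(z)]] with a(z) of size m₁×m₁ and d(z) of size m₂×m₂. Set β₁ = α − iϑ₁ϑ₁*S₀⁻¹ and β₂ = α − iϑ₂ϑ₂*S₀⁻¹. Then: (1) for every z that is an eigenvalue of neither α nor β₁, the matrix a(z) is invertible and c(z)a(z)⁻¹ = iϑ₂*S₀⁻¹(zI_n − β₁)⁻¹ϑ₁; and (2) for every z such that −zI_n − α and zI_n + β₂ are invertible (i.e., −z is an eigenvalue of neither α nor β₂), the matrix d(−z) is invertible and b(−z)d(−z)⁻¹ = −iϑ₁*S₀⁻¹(zI_n + β₂)⁻¹ϑ₂. -/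
open Matrix
open scoped ComplexOrder

lemma aux_inv {n p q : ℕ} (M S : Matrix (Fin n) (Fin n) ℂ)
    (u : Matrix (Fin n) (Fin p) ℂ) (v : Matrix (Fin n) (Fin q) ℂ)
    (hM : IsUnit M) (hN : IsUnit (M + Complex.I • (u * uᴴ * S))) :
    IsUnit (1 + Complex.I • (uᴴ * S * M⁻¹ * u)) ∧
    (Complex.I • (vᴴ * S * M⁻¹ * u)) * (1 + Complex.I • (uᴴ * S * M⁻¹ * u))⁻¹
      = Complex.I • (vᴴ * S * (M + Complex.I • (u * uᴴ * S))⁻¹ * u) := by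
  set N := M + Complex.I • (u * uᴴ * S) with hNdef
  set A := 1 + Complex.I • (uᴴ * S * M⁻¹ * u) with hA
  have hMd : IsUnit M.det := (Matrix.isUnit_iff_isUnit_det M).mp hM
  have hNd : IsUnit N.det := (Matrix.isUnit_iff_isUnit_det N).mp hN
  have key : 1 + u * (Complex.I • (uᴴ * S * M⁻¹)) = N * M⁻¹ := by
    rw [hNdef, Matrix.add_mul, Matrix.mul_nonsing_inv M hMd, Matrix.smul_mul,
      Matrix.mul_smul]
    simp [Matrix.mul_assoc]
  have hdet : A.det = N.det * M⁻¹.det := by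
    have hA' : A = 1 + (Complex.I • (uᴴ * S * M⁻¹)) * u := by
      rw [hA, Matrix.smul_mul, Matrix.mul_assoc]
    rw [hA', Matrix.det_one_add_mul_comm, key, Matrix.det_mul]
  have hAunit : IsUnit A := by
    rw [Matrix.isUnit_iff_isUnit_det, hdet]
    exact hNd.mul ((Matrix.isUnit_nonsing_inv_det M hMd))
  refine ⟨hAunit, ?_⟩
  have hAd : IsUnit A.det := (Matrix.isUnit_iff_isUnit_det A).mp hAunit
  have h1 : N * (M⁻¹ * u) = u * A := by
    rw [hNdef, Matrix.add_mul, ← Matrix.mul_assoc, Matrix.mul_nonsing_inv M hMd,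
      Matrix.one_mul, hA, Matrix.mul_add, Matrix.mul_one, Matrix.mul_smul,
      Matrix.smul_mul]
    simp [Matrix.mul_assoc]
  have h2 : M⁻¹ * u * A⁻¹ = N⁻¹ * u := by
    have h := congrArg (fun X => N⁻¹ * X * A⁻¹) h1
    rw [← Matrix.mul_assoc, Matrix.nonsing_inv_mul N hNd, Matrix.one_mul] at h
    rw [h, Matrix.mul_assoc N⁻¹, Matrix.mul_assoc u, Matrix.mul_nonsing_inv A hAd,
      Matrix.mul_one]
  calc (Complex.I • (vᴴ * S * M⁻¹ * u)) * A⁻¹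
      = Complex.I • (vᴴ * S * (M⁻¹ * u * A⁻¹)) := by
        rw [Matrix.smul_mul]; congr 1; simp [Matrix.mul_assoc]
    _ = Complex.I • (vᴴ * S * N⁻¹ * u) := by rw [h2]; simp [Matrix.mul_assoc]

/-- A quadruple `{α, S₀, ϑ₁, ϑ₂}` is admissible if `S₀` is Hermitian positive definite and
`αS₀ − S₀α* = i(ϑ₁ϑ₁* + ϑ₂ϑ₂*)`. -/
def Admissible {n m₁ m₂ : ℕ} (α S₀ : Matrix (Fin n) (Fin n) ℂ)
    (θ₁ : Matrix (Fin n) (Fin m₁) ℂ) (θ₂ : Matrix (Fin n) (Fin m₂) ℂ) : Prop :=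
  S₀.PosDef ∧ α * S₀ - S₀ * αᴴ = Complex.I • (θ₁ * θ₁ᴴ + θ₂ * θ₂ᴴ)

/-- the block entries of the transfer function `W_Σ` recover the two
associated functions: `c(z)a(z)⁻¹ = iϑ₂*S₀⁻¹(zI − β₁)⁻¹ϑ₁` and
`b(−z)d(−z)⁻¹ = −iϑ₁*S₀⁻¹(zI + β₂)⁻¹ϑ₂`, where `β₁ = α − iϑ₁ϑ₁*S₀⁻¹` and
`β₂ = α − iϑ₂ϑ₂*S₀⁻¹`. -/
theorem transfer_function_block_linear_fractional
    {n m₁ m₂ : ℕ} (α S₀ : Matrix (Fin n) (Fin n) ℂ)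
    (θ₁ : Matrix (Fin n) (Fin m₁) ℂ) (θ₂ : Matrix (Fin n) (Fin m₂) ℂ)
    (hadm : Admissible α S₀ θ₁ θ₂)
    (Λ : Matrix (Fin n) (Fin m₁ ⊕ Fin m₂) ℂ) (hΛ : Λ = Matrix.fromCols θ₁ θ₂)
    (W : ℂ → Matrix (Fin m₁ ⊕ Fin m₂) (Fin m₁ ⊕ Fin m₂) ℂ)
    (hW : ∀ z : ℂ, W z = 1 + Complex.I • (Λᴴ * S₀⁻¹ * (z • 1 - α)⁻¹ * Λ))
    (a : ℂ → Matrix (Fin m₁) (Fin m₁) ℂ) (ha : ∀ z : ℂ, a z = Matrix.toBlocks₁₁ (W z))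
    (b : ℂ → Matrix (Fin m₁) (Fin m₂) ℂ) (hb : ∀ z : ℂ, b z = Matrix.toBlocks₁₂ (W z))
    (c : ℂ → Matrix (Fin m₂) (Fin m₁) ℂ) (hc : ∀ z : ℂ, c z = Matrix.toBlocks₂₁ (W z))
    (d : ℂ → Matrix (Fin m₂) (Fin m₂) ℂ) (hd : ∀ z : ℂ, d z = Matrix.toBlocks₂₂ (W z))
    (β₁ β₂ : Matrix (Fin n) (Fin n) ℂ)
    (hβ₁ : β₁ = α - Complex.I • (θ₁ * θ₁ᴴ * S₀⁻¹))
    (hβ₂ : β₂ = α - Complex.I • (θ₂ * θ₂ᴴ * S₀⁻¹)) :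
    (∀ z : ℂ, z ∉ spectrum ℂ α → z ∉ spectrum ℂ β₁ →
      IsUnit (a z) ∧
      c z * (a z)⁻¹ = Complex.I • (θ₂ᴴ * S₀⁻¹ * (z • 1 - β₁)⁻¹ * θ₁)) ∧
    (∀ z : ℂ, -z ∉ spectrum ℂ α → -z ∉ spectrum ℂ β₂ →
      IsUnit (d (-z)) ∧
      b (-z) * (d (-z))⁻¹ = -(Complex.I • (θ₁ᴴ * S₀⁻¹ * (z • 1 + β₂)⁻¹ * θ₂))) := by
  -- block decomposition of W
  have hablock : ∀ z : ℂ, a z = 1 + Complex.I • (θ₁ᴴ * S₀⁻¹ * (z • 1 - α)⁻¹ * θ₁) := by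
    intro z
    rw [ha, hW, hΛ, Matrix.conjTranspose_fromCols_eq_fromRows_conjTranspose,
      Matrix.fromRows_mul, Matrix.fromRows_mul, Matrix.fromRows_mul_fromCols]
    simp [Matrix.toBlocks₁₁, Matrix.fromBlocks, Matrix.one_apply]
    ext i j
    simp [Matrix.add_apply, Matrix.one_apply, Matrix.fromBlocks]
  have hbblock : ∀ z : ℂ, b z = Complex.I • (θ₁ᴴ * S₀⁻¹ * (z • 1 - α)⁻¹ * θ₂) := by
    intro z
    rw [hb, hW, hΛ, Matrix.conjTranspose_fromCols_eq_fromRows_conjTranspose,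
      Matrix.fromRows_mul, Matrix.fromRows_mul, Matrix.fromRows_mul_fromCols]
    ext i j
    simp [Matrix.toBlocks₁₂, Matrix.add_apply, Matrix.one_apply, Matrix.fromBlocks]
  have hcblock : ∀ z : ℂ, c z = Complex.I • (θ₂ᴴ * S₀⁻¹ * (z • 1 - α)⁻¹ * θ₁) := by
    intro z
    rw [hc, hW, hΛ, Matrix.conjTranspose_fromCols_eq_fromRows_conjTranspose,
      Matrix.fromRows_mul, Matrix.fromRows_mul, Matrix.fromRows_mul_fromCols]
    ext i j
    simp [Matrix.toBlocks₂₁, Matrix.add_apply, Matrix.one_apply, Matrix.fromBlocks]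
  have hdblock : ∀ z : ℂ, d z = 1 + Complex.I • (θ₂ᴴ * S₀⁻¹ * (z • 1 - α)⁻¹ * θ₂) := by
    intro z
    rw [hd, hW, hΛ, Matrix.conjTranspose_fromCols_eq_fromRows_conjTranspose,
      Matrix.fromRows_mul, Matrix.fromRows_mul, Matrix.fromRows_mul_fromCols]
    ext i j
    simp [Matrix.toBlocks₂₂, Matrix.add_apply, Matrix.one_apply, Matrix.fromBlocks]
  constructor
  · intro z hzα hzβ
    have hM : IsUnit (z • (1 : Matrix (Fin n) (Fin n) ℂ) - α) := by
      rw [spectrum.notMem_iff, Algebra.algebraMap_eq_smul_one] at hzα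
      exact hzα
    have hNeq : z • (1 : Matrix (Fin n) (Fin n) ℂ) - β₁
        = (z • 1 - α) + Complex.I • (θ₁ * θ₁ᴴ * S₀⁻¹) := by
      rw [hβ₁]; abel
    have hN : IsUnit ((z • (1 : Matrix (Fin n) (Fin n) ℂ) - α)
        + Complex.I • (θ₁ * θ₁ᴴ * S₀⁻¹)) := by
      rw [spectrum.notMem_iff, Algebra.algebraMap_eq_smul_one, hNeq] at hzβ
      exact hzβ
    obtain ⟨h1, h2⟩ := aux_inv (z • 1 - α) S₀⁻¹ θ₁ θ₂ hM hN
    refine ⟨by rw [hablock]; exact h1, ?_⟩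
    rw [hcblock, hablock, h2, hNeq]
  · intro z hzα hzβ
    have hM : IsUnit ((-z) • (1 : Matrix (Fin n) (Fin n) ℂ) - α) := by
      rw [spectrum.notMem_iff, Algebra.algebraMap_eq_smul_one] at hzα
      exact hzα
    have hNeq : (-z) • (1 : Matrix (Fin n) (Fin n) ℂ) - β₂
        = ((-z) • 1 - α) + Complex.I • (θ₂ * θ₂ᴴ * S₀⁻¹) := by
      rw [hβ₂]; abel
    have hN : IsUnit (((-z) • (1 : Matrix (Fin n) (Fin n) ℂ) - α)
        + Complex.I • (θ₂ * θ₂ᴴ * S₀⁻¹)) := by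
      rw [spectrum.notMem_iff, Algebra.algebraMap_eq_smul_one, hNeq] at hzβ
      exact hzβ
    obtain ⟨h1, h2⟩ := aux_inv ((-z) • 1 - α) S₀⁻¹ θ₂ θ₁ hM hN
    refine ⟨by rw [hdblock]; exact h1, ?_⟩
    have hneg : ((-z) • (1 : Matrix (Fin n) (Fin n) ℂ) - α)
        + Complex.I • (θ₂ * θ₂ᴴ * S₀⁻¹) = -(z • 1 + β₂) := by
      rw [hβ₂]; module
    have hBd : IsUnit (z • (1 : Matrix (Fin n) (Fin n) ℂ) + β₂).det := by
      have : IsUnit (-(z • (1 : Matrix (Fin n) (Fin n) ℂ) + β₂)) := hneg ▸ hN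
      rw [Matrix.isUnit_iff_isUnit_det, Matrix.det_neg] at this
      simp only [isUnit_iff_ne_zero, mul_ne_zero_iff] at this ⊢
      exact this.2
    have hinv : (-(z • (1 : Matrix (Fin n) (Fin n) ℂ) + β₂))⁻¹
        = -((z • 1 + β₂)⁻¹) := by
      apply Matrix.inv_eq_right_inv
      rw [neg_mul_neg, Matrix.mul_nonsing_inv _ hBd]
    rw [hbblock, hdblock, h2, hneg, hinv]
    simp [Matrix.mul_neg, Matrix.neg_mul]
end

section
/- Let γ be an n×n complex matrix and let θ₁, θ₂ be complex matrices of sizes n×m₁ and n×m₂ such that the pair (γ, θ₁) is controllable and the pair (γ*, θ₂) is controllable (i.e., the realization φ(z) = iθ₂*(zI_n − γ)⁻¹θ₁ is minimal). Suppose X is an n×n Hermitian positive definite matrix satisfying the algebraic Riccati equation γX − Xγ* − iXθ₂θ₂*X + iθ₁θ₁* = 0. Define ϑ₁ = X^{−1/2}θ₁, ϑ₂ = X^{1/2}θ₂, and α = X^{−1/2}γX^{1/2} + iϑ₁ϑ₁*, where X^{1/2} is the positive definite square root of X. Then the quadruple Σ = {α, I_n, ϑ₁, ϑ₂} is admissible,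 both pairs (α, ϑ₁) and (α, ϑ₂) are controllable, and for every z that is not an eigenvalue of γ one has iϑ₂*(zI_n − β₁)⁻¹ϑ₁ = iθ₂*(zI_n − γ)⁻¹θ₁, where β₁ = α − iϑ₁ϑ₁* (so that φ coincides with the function φ_{1,Σ} associated with Σ). -/
/-!
Write `T` for the square root of `X` and `γ' = T⁻¹γT`. Conjugating the Riccati equation by `T⁻¹`
turns it into `γ' + iϑ₁ϑ₁* = γ'* + iϑ₂ϑ₂*`, and both sides equal `α`; this gives
`α − α* = i(ϑ₁ϑ₁* + ϑ₂ϑ₂*)`. The two expressions exhibit `α` as a state feedback of `(γ', ϑ₁)`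
and of `(γ'*, ϑ₂)`, systems similar to `(γ, θ₁)` and `(γ*, θ₂)`. Similarity and feedback preserve
the Krylov subspace spanned by the columns of all `AᵏB`, which by Cayley–Hamilton is already spanned
by those with `k < n`; so both pairs stay controllable. Finally `β₁ = γ'`, and the transfer function
is invariant under similarity.
-/

open Matrix
open scoped ComplexOrder

/-- A pair `(A, B)` is controllable if the columns of `B, AB, …, A^{n−1}B` span `ℂⁿ`. -/
def Controllable {n p : ℕ} (A : Matrix (Fin n) (Fin n) ℂ) (B : Matrix (Fin n) (Fin p) ℂ) :
    Prop :=
  Submodule.span ℂ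
    {v : Fin n → ℂ | ∃ k : ℕ, k < n ∧ ∃ j : Fin p, v = fun i => (A ^ k * B) i j} = ⊤

namespace Matrix

variable {R : Type*} [CommRing R] {m p : Type*} [Fintype m] [DecidableEq m] [Fintype p]

def krylov (A : Matrix m m R) (B : Matrix m p R) : Submodule R (m → R) :=
  ⨆ k : ℕ, LinearMap.range (A ^ k * B).mulVecLin

theorem mulVec_mem_krylov (A : Matrix m m R) (B : Matrix m p R) (k : ℕ) (v : p → R) :
    (A ^ k * B) *ᵥ v ∈ krylov A B :=
  Submodule.mem_iSup_of_mem k ⟨v, rfl⟩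

theorem krylov_le {A : Matrix m m R} {B : Matrix m p R} {W : Submodule R (m → R)}
    (hB : ∀ v, B *ᵥ v ∈ W) (hA : ∀ w ∈ W, A *ᵥ w ∈ W) : krylov A B ≤ W := by
  refine iSup_le fun k => ?_
  rintro _ ⟨v, rfl⟩
  induction k with
  | zero => simpa using hB v
  | succ k ih => simpa [pow_succ', Matrix.mul_assoc, ← mulVec_mulVec] using hA _ ih

theorem mulVec_mem_krylov_of_mem {A : Matrix m m R} {B : Matrix m p R} {w : m → R}
    (hw : w ∈ krylov A B) : A *ᵥ w ∈ krylov A B := by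
  suffices krylov A B ≤ (krylov A B).comap A.mulVecLin from this hw
  refine iSup_le fun k => ?_
  rintro _ ⟨v, rfl⟩
  simpa [mulVec_mulVec, ← Matrix.mul_assoc, ← pow_succ'] using mulVec_mem_krylov A B (k + 1) v

theorem krylov_add_mul_le (A : Matrix m m R) (B : Matrix m p R) (F : Matrix p m R) :
    krylov (A + B * F) B ≤ krylov A B := by
  refine krylov_le (fun v => by simpa using mulVec_mem_krylov A B 0 v) fun w hw => ?_
  rw [add_mulVec, ← mulVec_mulVec]
  exact add_mem (mulVec_mem_krylov_of_mem hw) (by simpa using mulVec_mem_krylov A B 0 (F *ᵥ w))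

theorem krylov_add_mul (A : Matrix m m R) (B : Matrix m p R) (F : Matrix p m R) :
    krylov (A + B * F) B = krylov A B := by
  refine le_antisymm (krylov_add_mul_le A B F) ?_
  simpa using krylov_add_mul_le (A + B * F) B (-F)

theorem krylov_conj (A : Matrix m m R) (B : Matrix m p R) {P Q : Matrix m m R}
    (hQP : Q * P = 1) : krylov (P * A * Q) (P * B) = (krylov A B).map P.mulVecLin := by
  have hpow : ∀ k : ℕ, (P * A * Q) ^ k * (P * B) = P * (A ^ k * B) := by
    intro k
    induction k with
    | zero => simp
    | succ k ih =>
      rw [pow_succ', Matrix.mul_assoc, ih]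
      simp only [pow_succ', Matrix.mul_assoc, ← Matrix.mul_assoc Q P, hQP, Matrix.one_mul]
  simp only [krylov, Submodule.map_iSup, hpow, mulVecLin_mul, LinearMap.range_comp]

theorem krylov_le_iSup_lt [Nontrivial R] (A : Matrix m m R) (B : Matrix m p R) :
    krylov A B ≤ ⨆ k < Fintype.card m, LinearMap.range (A ^ k * B).mulVecLin := by
  rcases isEmpty_or_nonempty m with hm | hm
  · intro v _
    simp [Subsingleton.elim v 0]
  refine iSup_le fun k => ?_
  rintro _ ⟨v, rfl⟩
  have hdeg : (Polynomial.X ^ k %ₘ A.charpoly).natDegree < Fintype.card m := by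
    rw [← A.charpoly_natDegree_eq_dim]
    refine Polynomial.natDegree_modByMonic_lt _ A.charpoly_monic fun h => ?_
    simpa [h, eq_comm, Fintype.card_ne_zero] using A.charpoly_natDegree_eq_dim
  rw [mulVecLin_apply, pow_eq_aeval_mod_charpoly, Polynomial.aeval_eq_sum_range' hdeg,
    Matrix.sum_mul, Matrix.sum_mulVec]
  refine Submodule.sum_mem _ fun i hi => ?_
  rw [smul_mul, smul_mulVec]
  exact Submodule.smul_mem _ _ <|
    Submodule.mem_iSup_of_mem i <| Submodule.mem_iSup_of_mem (Finset.mem_range.1 hi) ⟨v, rfl⟩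

end Matrix

theorem controllable_iff_krylov_eq_top {n p : ℕ} (A : Matrix (Fin n) (Fin n) ℂ)
    (B : Matrix (Fin n) (Fin p) ℂ) : Controllable A B ↔ krylov A B = ⊤ := by
  have hspan : Submodule.span ℂ
      {v : Fin n → ℂ | ∃ k : ℕ, k < n ∧ ∃ j : Fin p, v = fun i => (A ^ k * B) i j}
      = ⨆ k < n, LinearMap.range (A ^ k * B).mulVecLin := by
    simp_rw [range_mulVecLin, ← Submodule.span_iUnion₂]
    congr 1
    ext v
    simp only [Set.mem_iUnion, Set.mem_range, exists_prop]
    constructor <;> rintro ⟨k, hk, j, rfl⟩ <;> exact ⟨k, hk, j, rfl⟩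
  rw [Controllable, hspan, ← top_le_iff, ← top_le_iff]
  constructor
  · intro h
    exact h.trans (iSup₂_le fun k _ => le_iSup (fun k => LinearMap.range (A ^ k * B).mulVecLin) k)
  · intro h
    simpa using h.trans (krylov_le_iSup_lt A B)

theorem Controllable.add_mul {n p : ℕ} {A : Matrix (Fin n) (Fin n) ℂ}
    {B : Matrix (Fin n) (Fin p) ℂ} (h : Controllable A B) (F : Matrix (Fin p) (Fin n) ℂ) :
    Controllable (A + B * F) B := by
  rwa [controllable_iff_krylov_eq_top, krylov_add_mul, ← controllable_iff_krylov_eq_top]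

theorem Controllable.conj {n p : ℕ} {A : Matrix (Fin n) (Fin n) ℂ}
    {B : Matrix (Fin n) (Fin p) ℂ} (h : Controllable A B) {P Q : Matrix (Fin n) (Fin n) ℂ}
    (hQP : Q * P = 1) : Controllable (P * A * Q) (P * B) := by
  rw [controllable_iff_krylov_eq_top] at h ⊢
  rw [krylov_conj A B hQP, h, Submodule.map_top, LinearMap.range_eq_top]
  exact fun w => ⟨Q *ᵥ w, by rw [mulVecLin_apply, mulVec_mulVec, mul_eq_one_comm.1 hQP, one_mulVec]⟩

namespace Matrix

variable {n : Type*} [Fintype n] [DecidableEq n] {T : Matrix n n ℂ}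

theorem IsHermitian.conjTranspose_inv_mul_mul (hT : T.IsHermitian) (A : Matrix n n ℂ) :
    (T⁻¹ * A * T)ᴴ = T * Aᴴ * T⁻¹ := by
  rw [conjTranspose_mul, conjTranspose_mul, hT.inv.eq, hT.eq, Matrix.mul_assoc]

theorem inv_smul_one_sub_inv_mul_mul (hT : IsUnit T.det) (A : Matrix n n ℂ) (z : ℂ) :
    (z • 1 - T⁻¹ * A * T)⁻¹ = T⁻¹ * (z • 1 - A)⁻¹ * T := by
  have hconj : z • 1 - T⁻¹ * A * T = T⁻¹ * (z • 1 - A) * T := by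
    rw [Matrix.mul_sub, Matrix.sub_mul, Matrix.mul_smul, Matrix.smul_mul, Matrix.mul_one,
      nonsing_inv_mul T hT]
  rw [hconj, Matrix.mul_inv_rev, Matrix.mul_inv_rev, nonsing_inv_nonsing_inv T hT,
    Matrix.mul_assoc]

end Matrix

theorem riccati_conj_sqrt {n p q : Type*} [Fintype n] [DecidableEq n] [Fintype p] [Fintype q]
    {T : Matrix n n ℂ} (hT : T.IsHermitian)
    (hdet : IsUnit T.det) {γ : Matrix n n ℂ} {θ₁ : Matrix n p ℂ} {θ₂ : Matrix n q ℂ}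
    (hRic : γ * (T * T) - (T * T) * γᴴ - Complex.I • ((T * T) * (θ₂ * θ₂ᴴ) * (T * T))
      + Complex.I • (θ₁ * θ₁ᴴ) = 0) :
    T⁻¹ * γ * T + Complex.I • ((T⁻¹ * θ₁) * (T⁻¹ * θ₁)ᴴ)
      = T * γᴴ * T⁻¹ + Complex.I • ((T * θ₂) * (T * θ₂)ᴴ) := by
  have hconj := congrArg (fun M => T⁻¹ * M * T⁻¹) hRic
  simp only [Matrix.mul_sub, Matrix.sub_mul, Matrix.mul_add, Matrix.add_mul, Matrix.mul_smul,
    Matrix.smul_mul, Matrix.mul_assoc, nonsing_inv_mul_cancel_left T _ hdet, mul_nonsing_inv T hdet,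
    Matrix.mul_one, Matrix.mul_zero, Matrix.zero_mul] at hconj
  rw [← sub_eq_zero, ← hconj]
  simp only [conjTranspose_mul, hT.eq, hT.inv.eq, Matrix.mul_assoc]
  abel

theorem admissible_one_of_eq_add {n p q : ℕ} {α γ : Matrix (Fin n) (Fin n) ℂ}
    {ϑ₁ : Matrix (Fin n) (Fin p) ℂ} {ϑ₂ : Matrix (Fin n) (Fin q) ℂ}
    (h₁ : α = γ + Complex.I • (ϑ₁ * ϑ₁ᴴ)) (h₂ : α = γᴴ + Complex.I • (ϑ₂ * ϑ₂ᴴ)) :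
    Admissible α 1 ϑ₁ ϑ₂ := by
  refine ⟨PosDef.one, ?_⟩
  rw [Matrix.mul_one, Matrix.one_mul]
  nth_rewrite 1 [h₂]
  rw [h₁, conjTranspose_add, conjTranspose_smul, conjTranspose_mul, conjTranspose_conjTranspose,
    Complex.star_def, Complex.conj_I]
  module

theorem inverse_problem_construction_general
    {n m₁ m₂ : ℕ} (γ : Matrix (Fin n) (Fin n) ℂ)
    (θ₁ : Matrix (Fin n) (Fin m₁) ℂ) (θ₂ : Matrix (Fin n) (Fin m₂) ℂ)
    (hc : Controllable γ θ₁) (ho : Controllable γᴴ θ₂)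
    (X : Matrix (Fin n) (Fin n) ℂ)
    (hRic : γ * X - X * γᴴ - Complex.I • (X * (θ₂ * θ₂ᴴ) * X)
      + Complex.I • (θ₁ * θ₁ᴴ) = 0)
    (Xh : Matrix (Fin n) (Fin n) ℂ)
    (hXh : Xh.PosDef ∧ Xh * Xh = X)  -- the positive definite square root of X
    (ϑ₁ : Matrix (Fin n) (Fin m₁) ℂ) (hϑ₁ : ϑ₁ = Xh⁻¹ * θ₁)
    (ϑ₂ : Matrix (Fin n) (Fin m₂) ℂ) (hϑ₂ : ϑ₂ = Xh * θ₂)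
    (α : Matrix (Fin n) (Fin n) ℂ)
    (hα : α = Xh⁻¹ * γ * Xh + Complex.I • (ϑ₁ * ϑ₁ᴴ))
    (β₁ : Matrix (Fin n) (Fin n) ℂ) (hβ₁ : β₁ = α - Complex.I • (ϑ₁ * ϑ₁ᴴ)) :
    Admissible α (1 : Matrix (Fin n) (Fin n) ℂ) ϑ₁ ϑ₂ ∧
    Controllable α ϑ₁ ∧ Controllable α ϑ₂ ∧
    ∀ z : ℂ, z ∉ spectrum ℂ γ →
      Complex.I • (ϑ₂ᴴ * (z • 1 - β₁)⁻¹ * ϑ₁) =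
        Complex.I • (θ₂ᴴ * (z • 1 - γ)⁻¹ * θ₁) := by
  obtain ⟨hXh, rfl⟩ := hXh
  subst hϑ₁ hϑ₂ hβ₁
  have hdet : IsUnit Xh.det := (isUnit_iff_isUnit_det Xh).1 hXh.isUnit
  have hα' : α = Xh * γᴴ * Xh⁻¹ + Complex.I • ((Xh * θ₂) * (Xh * θ₂)ᴴ) :=
    hα.trans (riccati_conj_sqrt hXh.isHermitian hdet hRic)
  refine ⟨admissible_one_of_eq_add hα ?_, ?_, ?_, fun z _ => ?_⟩
  · rwa [hXh.isHermitian.conjTranspose_inv_mul_mul]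
  · rw [hα, ← Matrix.mul_smul]
    exact (hc.conj (mul_nonsing_inv Xh hdet)).add_mul _
  · rw [hα', ← Matrix.mul_smul]
    exact (ho.conj (nonsing_inv_mul Xh hdet)).add_mul _
  · rw [hα, add_sub_cancel_right, inv_smul_one_sub_inv_mul_mul hdet, conjTranspose_mul,
      hXh.isHermitian.eq]
    simp only [Matrix.mul_assoc, mul_nonsing_inv_cancel_left Xh _ hdet]

/-- solution of the inverse problem. Given a minimal realization
`φ(z) = iθ₂*(zI − γ)⁻¹θ₁` and the positive definite solution `X` of the Riccati equation
`γX − Xγ* − iXθ₂θ₂*X + iθ₁θ₁* = 0`, the quadruple `Σ = {α, I_n, ϑ₁, ϑ₂}` with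
`ϑ₁ = X^{−1/2}θ₁`, `ϑ₂ = X^{1/2}θ₂`, `α = X^{−1/2}γX^{1/2} + iϑ₁ϑ₁*` is admissible,
`(α, ϑ₁)` and `(α, ϑ₂)` are controllable, and `φ = φ_{1,Σ}`. -/
theorem inverse_problem_construction
    {n m₁ m₂ : ℕ} (γ : Matrix (Fin n) (Fin n) ℂ)
    (θ₁ : Matrix (Fin n) (Fin m₁) ℂ) (θ₂ : Matrix (Fin n) (Fin m₂) ℂ)
    (hc : Controllable γ θ₁) (ho : Controllable γᴴ θ₂)
    (X : Matrix (Fin n) (Fin n) ℂ) (hX : X.PosDef)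
    (hRic : γ * X - X * γᴴ - Complex.I • (X * (θ₂ * θ₂ᴴ) * X)
      + Complex.I • (θ₁ * θ₁ᴴ) = 0)
    (Xh : Matrix (Fin n) (Fin n) ℂ)
    (hXh : Xh.PosDef ∧ Xh * Xh = X)  -- the positive definite square root of X
    (ϑ₁ : Matrix (Fin n) (Fin m₁) ℂ) (hϑ₁ : ϑ₁ = Xh⁻¹ * θ₁)
    (ϑ₂ : Matrix (Fin n) (Fin m₂) ℂ) (hϑ₂ : ϑ₂ = Xh * θ₂)
    (α : Matrix (Fin n) (Fin n) ℂ)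
    (hα : α = Xh⁻¹ * γ * Xh + Complex.I • (ϑ₁ * ϑ₁ᴴ))
    (β₁ : Matrix (Fin n) (Fin n) ℂ) (hβ₁ : β₁ = α - Complex.I • (ϑ₁ * ϑ₁ᴴ)) :
    Admissible α (1 : Matrix (Fin n) (Fin n) ℂ) ϑ₁ ϑ₂ ∧
    Controllable α ϑ₁ ∧ Controllable α ϑ₂ ∧
    ∀ z : ℂ, z ∉ spectrum ℂ γ →
      Complex.I • (ϑ₂ᴴ * (z • 1 - β₁)⁻¹ * ϑ₁) =
        Complex.I • (θ₂ᴴ * (z • 1 - γ)⁻¹ * θ₁) :=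
  inverse_problem_construction_general γ θ₁ θ₂ hc ho X hRic Xh hXh ϑ₁ hϑ₁ ϑ₂ hϑ₂ α hα β₁ hβ₁
end
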